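/- arXiv:2605.03825 — 2 statements merged into one kernel-verified Lean document; each statement's English description precedes it below -/
import Mathlib

section
/- Let G be a graph in which no two vertices of equal degree are endpoints of a path on 2ℓ+2 vertices, let u₁, u₂ have equal degree, and let B₁ = N(u₁)∖N[u₂], B₂ = N(u₂)∖N[u₁]. Then the bipartite subgraph G[B₁, B₂] contains no path on 2ℓ vertices. -/
/-- The bipartite subgraph of `G` with parts `S` and `T`: edges of `G` with
one endpoint in `S` and the other in `T`. -/
def bipartiteBetween {V : Type*} (G : SimpleGraph V) (S T : Set V) :
    SimpleGraph V where
  Adj x y := G.Adj x y ∧ ((x ∈ S ∧ y ∈ T) ∨ (x ∈ T ∧ y ∈ S))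
  symm := ⟨fun x y ⟨h, hc⟩ =>
    ⟨h.symm, hc.elim (fun ⟨a, b⟩ => Or.inr ⟨b, a⟩) (fun ⟨a, b⟩ => Or.inl ⟨b, a⟩)⟩⟩
  loopless := ⟨fun x ⟨h, _⟩ => G.irrefl h⟩

/-!
The endpoints of a path on `2ℓ` vertices in `G[B₁, B₂]` lie on opposite sides, say `x ∈ B₁` and
`y ∈ B₂`. Since `u₁, u₂ ∉ B₁ ∪ B₂`, prepending the edge `u₁x` and appending `yu₂` gives a path on
`2ℓ + 2` vertices in `G` between the equal-degree vertices `u₁` and `u₂`.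
-/

namespace SimpleGraph

variable {V : Type*} {G : SimpleGraph V} {s t : Set V} {u w x y : V}

theorem bipartiteBetween_le (G : SimpleGraph V) (s t : Set V) : bipartiteBetween G s t ≤ G :=
  fun _ _ h => h.1

theorem isBipartiteWith_bipartiteBetween (h : Disjoint s t) :
    (bipartiteBetween G s t).IsBipartiteWith s t :=
  ⟨h, fun _ _ hadj => hadj.2⟩

theorem IsBipartiteWith.mem_and_mem_of_odd_length (h : G.IsBipartiteWith s t) (p : G.Walk x y)
    (hodd : Odd p.length) : x ∈ s ∧ y ∈ t ∨ x ∈ t ∧ y ∈ s := by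
  classical
  have hnil : ¬p.Nil := fun hp => by simp [hp.length_eq_zero] at hodd
  have hx := isBipartiteWith_support_subset h
    (mem_support_of_mem_walk_support p hnil p.start_mem_support)
  have hy := isBipartiteWith_support_subset h
    (mem_support_of_mem_walk_support p hnil p.end_mem_support)
  let c : G.Coloring Bool := Coloring.mk (fun v => decide (v ∈ s)) fun hadj => by
    rcases h.mem_of_adj hadj with ⟨hv, hw⟩ | ⟨hv, hw⟩
    · simp [hv, h.disjoint.notMem_of_mem_right hw]
    · simp [hw, h.disjoint.notMem_of_mem_right hv]
  have hc (v : V) : c v = true ↔ v ∈ s := decide_eq_true_iff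
  have hparity : ¬x ∈ s ↔ y ∈ s := by
    simpa only [hc] using (c.odd_length_iff_not_congr p).mp hodd
  have := h.disjoint.notMem_of_mem_left (a := x)
  have := h.disjoint.notMem_of_mem_left (a := y)
  rcases hx with hx | hx <;> rcases hy with hy | hy <;> tauto

theorem IsBipartiteWith.mem_union_of_mem_support (h : G.IsBipartiteWith s t) (p : G.Walk x y)
    (hx : x ∈ s ∪ t) : ∀ v ∈ p.support, v ∈ s ∪ t := by
  intro v hv
  by_cases hnil : p.Nil
  · rw [Walk.nil_iff_support_eq.mp hnil, List.mem_singleton] at hv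
    exact hv ▸ hx
  · exact isBipartiteWith_support_subset h (mem_support_of_mem_walk_support p hnil hv)

/-- `N(u) ∖ N[w]`. -/
def exclusiveNeighborSet (G : SimpleGraph V) (u w : V) : Set V :=
  G.neighborSet u \ (G.neighborSet w ∪ {w})

theorem disjoint_exclusiveNeighborSet (G : SimpleGraph V) (u w : V) :
    Disjoint (G.exclusiveNeighborSet u w) (G.exclusiveNeighborSet w u) :=
  Set.disjoint_left.mpr fun _ hu hw => hu.2 (Or.inl hw.1)

theorem left_notMem_exclusiveNeighborSet : u ∉ G.exclusiveNeighborSet u w :=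
  fun h => G.irrefl h.1

theorem right_notMem_exclusiveNeighborSet : w ∉ G.exclusiveNeighborSet u w :=
  fun h => h.2 (Or.inr rfl)

theorem ne_of_mem_exclusiveNeighborSet (hx : x ∈ G.exclusiveNeighborSet u w) : u ≠ w := by
  rintro rfl
  exact hx.2 (Or.inl hx.1)

theorem exists_isPath_of_isPath_bipartiteBetween
    (p : (bipartiteBetween G (G.exclusiveNeighborSet u w) (G.exclusiveNeighborSet w u)).Walk x y)
    (hp : p.IsPath) (hx : x ∈ G.exclusiveNeighborSet u w) (hy : y ∈ G.exclusiveNeighborSet w u) :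
    ∃ q : G.Walk u w, q.IsPath ∧ q.length = p.length + 2 := by
  have hB := isBipartiteWith_bipartiteBetween (G := G) (disjoint_exclusiveNeighborSet G u w)
  have hsupp := hB.mem_union_of_mem_support p (Or.inl hx)
  have hu : u ∉ p.support := fun hu => (hsupp u hu).elim
    left_notMem_exclusiveNeighborSet right_notMem_exclusiveNeighborSet
  have hw : w ∉ p.support := fun hw => (hsupp w hw).elim
    right_notMem_exclusiveNeighborSet left_notMem_exclusiveNeighborSet
  have hux : G.Adj u x := hx.1
  have hyw : G.Adj y w := hy.1.symm
  let p' : G.Walk x y := p.mapLe (bipartiteBetween_le ..)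
  have hp' : p'.IsPath := hp.mapLe _
  have hsupp' : p'.support = p.support := Walk.support_mapLe_eq_support ..
  refine ⟨.cons hux (p'.concat hyw), ?_, by simp [p']⟩
  refine (hp'.concat (hsupp' ▸ hw) _).cons ?_
  rw [Walk.support_concat, hsupp', List.mem_append, List.mem_singleton]
  exact fun h => h.elim hu (ne_of_mem_exclusiveNeighborSet hx)

end SimpleGraph

theorem bipartite_pieces_path_free_general {V : Type*} [Fintype V]
    (G : SimpleGraph V) [DecidableRel G.Adj] (ℓ : ℕ) (u₁ u₂ : V)
    (hdeg : G.degree u₁ = G.degree u₂)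
    (hfree : ∀ (x y : V), x ≠ y → G.degree x = G.degree y →
      ∀ (p : G.Walk x y), p.IsPath → p.length + 1 ≠ 2 * ℓ + 2) :
    ∀ (x y : V)
      (p : (bipartiteBetween G (G.neighborSet u₁ \ (G.neighborSet u₂ ∪ {u₂}))
              (G.neighborSet u₂ \ (G.neighborSet u₁ ∪ {u₁}))).Walk x y),
      p.IsPath → p.length + 1 ≠ 2 * ℓ := by
  intro x y
  change ∀ p : (bipartiteBetween G (G.exclusiveNeighborSet u₁ u₂)
    (G.exclusiveNeighborSet u₂ u₁)).Walk x y, p.IsPath → p.length + 1 ≠ 2 * ℓ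
  intro p hp hlen
  have hodd : Odd p.length := ⟨ℓ - 1, by omega⟩
  have hB := SimpleGraph.isBipartiteWith_bipartiteBetween (G := G)
    (SimpleGraph.disjoint_exclusiveNeighborSet G u₁ u₂)
  rcases hB.mem_and_mem_of_odd_length p hodd with ⟨hx, hy⟩ | ⟨hx, hy⟩
  · obtain ⟨q, hq, hqlen⟩ :=
      SimpleGraph.exists_isPath_of_isPath_bipartiteBetween p hp hx hy
    exact hfree u₁ u₂ (SimpleGraph.ne_of_mem_exclusiveNeighborSet hx) hdeg q hq (by omega)
  · obtain ⟨q, hq, hqlen⟩ :=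
      SimpleGraph.exists_isPath_of_isPath_bipartiteBetween p.reverse hp.reverse hy hx
    rw [SimpleGraph.Walk.length_reverse] at hqlen
    exact hfree u₁ u₂ (SimpleGraph.ne_of_mem_exclusiveNeighborSet hy) hdeg q hq (by omega)

/-- If no two vertices of equal degree in `G` are endpoints of a path on
`2ℓ+2` vertices, and `u₁, u₂` have equal degree, then the bipartite subgraph
`G[B₁, B₂]` with `B₁ = N(u₁)∖N[u₂]`, `B₂ = N(u₂)∖N[u₁]` contains no path on
`2ℓ` vertices. -/
theorem bipartite_pieces_path_free {V : Type*} [Fintype V] [DecidableEq V]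
    (G : SimpleGraph V) [DecidableRel G.Adj] (ℓ : ℕ) (u₁ u₂ : V)
    (hne : u₁ ≠ u₂) (hdeg : G.degree u₁ = G.degree u₂)
    (hfree : ∀ (x y : V), x ≠ y → G.degree x = G.degree y →
      ∀ (p : G.Walk x y), p.IsPath → p.length + 1 ≠ 2 * ℓ + 2) :
    ∀ (x y : V)
      (p : (bipartiteBetween G (G.neighborSet u₁ \ (G.neighborSet u₂ ∪ {u₂}))
              (G.neighborSet u₂ \ (G.neighborSet u₁ ∪ {u₁}))).Walk x y),
      p.IsPath → p.length + 1 ≠ 2 * ℓ :=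
  bipartite_pieces_path_free_general G ℓ u₁ u₂ hdeg hfree
end

section
/- Let G be a graph on 2n+1 vertices with at least n²+n edges, and suppose the largest repeated degree β satisfies β ≤ n. Then the maximum degree Δ of G satisfies Δ ≥ n + √n, provided n is sufficiently large. -/
/-!
Vertices whose degree exceeds `β` have pairwise distinct degrees in `(β, Δ]`, so their excess
over `β` sums to at most `1 + 2 + ⋯ + (Δ - β)`. Hence the degree sum `2|E| ≥ 2n² + 2n` is at
most `(2n + 1)β + (Δ - β)(Δ - β + 1)/2`, and with `β ≤ n` this forces `Δ ≥ n + √n`.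
-/

open Finset

namespace Finset

variable {ι : Type*} {s : Finset ι} {f : ι → ℕ} {β Δ : ℕ}

theorem sum_tsub_le_sum_range_of_injOn (hinj : Set.InjOn f {i | i ∈ s ∧ β < f i})
    (hΔ : ∀ i ∈ s, f i ≤ Δ) : ∑ i ∈ s, (f i - β) ≤ ∑ m ∈ range (Δ - β + 1), m := by
  classical
  calc ∑ i ∈ s, (f i - β)
      = ∑ i ∈ s with β < f i, (f i - β) := (sum_filter_of_ne fun i _ h => by omega).symm
    _ = ∑ m ∈ (s.filter (β < f ·)).image (fun i => f i - β), m := by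
        refine (sum_image (f := id) fun i hi j hj hij => ?_).symm
        simp only [coe_filter, Set.mem_ofPred_eq] at hi hj
        exact hinj hi hj (by omega)
    _ ≤ ∑ m ∈ range (Δ - β + 1), m := by
        refine sum_le_sum_of_subset fun m hm => ?_
        obtain ⟨i, hi, rfl⟩ := mem_image.1 hm
        have := hΔ i (mem_filter.1 hi).1
        rw [mem_range]
        omega

theorem two_mul_sum_le_of_injOn (hinj : Set.InjOn f {i | i ∈ s ∧ β < f i})
    (hΔ : ∀ i ∈ s, f i ≤ Δ) :
    2 * ∑ i ∈ s, f i ≤ 2 * #s * β + (Δ - β + 1) * (Δ - β) := by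
  have hsplit : ∑ i ∈ s, f i ≤ ∑ i ∈ s, (β + (f i - β)) := sum_le_sum fun i _ => by omega
  rw [sum_add_distrib, sum_const, smul_eq_mul] at hsplit
  have := sum_tsub_le_sum_range_of_injOn hinj hΔ
  have := sum_range_id_mul_two (Δ - β + 1)
  rw [Nat.add_sub_cancel] at this
  nlinarith

end Finset

theorem SimpleGraph.four_mul_card_edgeFinset_le {V : Type*} [Fintype V] (G : SimpleGraph V)
    [DecidableRel G.Adj] {β Δ : ℕ} (hΔ : ∀ v, G.degree v ≤ Δ)
    (hrep : ∀ u v, u ≠ v → G.degree u = G.degree v → G.degree u ≤ β) :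
    4 * #G.edgeFinset ≤ 2 * Fintype.card V * β + (Δ - β + 1) * (Δ - β) := by
  have hinj : Set.InjOn (fun v => G.degree v) {v | v ∈ univ ∧ β < G.degree v} := by
    rintro u ⟨-, hu⟩ v - huv
    by_contra hne
    exact (hrep u v hne huv).not_gt hu
  have := two_mul_sum_le_of_injOn hinj fun v _ => hΔ v
  rw [G.sum_degrees_eq_twice_card_edges, card_univ] at this
  omega

theorem add_sqrt_le_of_four_mul_le (n β t : ℝ) (hn : 1 ≤ n) (hβ : 0 ≤ β) (hβn : β ≤ n) (ht : 0 ≤ t)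
    (h : 4 * (n ^ 2 + n) ≤ 2 * (2 * n + 1) * β + (t + 1) * t) : n + √n ≤ β + t := by
  set s := √n
  have hs2 : s ^ 2 = n := Real.sq_sqrt (by linarith)
  have hs1 : 1 ≤ s := Real.one_le_sqrt.mpr hn
  by_contra! hlt
  rcases le_total (β + t) n with hle | hle
  · nlinarith
  · have hsn : s ≤ n := by nlinarith
    -- at fixed `β + t`, the right side of `h` is largest at `β = n`
    have hexcess : 2 * n ≤ (β + t - n) ^ 2 + (β + t - n) := by
      nlinarith [mul_nonneg (sub_nonneg.2 hβn) (by linarith : 0 ≤ 3 * n + 1 + β - 2 * (β + t - n))]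
    nlinarith

/-- If `G` has `2n+1` vertices, at least `n²+n` edges, and the largest repeated
degree `β` satisfies `β ≤ n`, then for sufficiently large `n` the maximum
degree `Δ` satisfies `Δ ≥ n + √n`. -/
theorem max_degree_ge_of_beta_le :
    ∃ N : ℕ, ∀ n : ℕ, N ≤ n →
    ∀ (V : Type) [Fintype V] [DecidableEq V] (G : SimpleGraph V)
      [DecidableRel G.Adj] (Δ β : ℕ),
      Fintype.card V = 2 * n + 1 →
      n ^ 2 + n ≤ G.edgeFinset.card →
      (∀ v : V, G.degree v ≤ Δ) → (∃ v : V, G.degree v = Δ) →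
      (∃ u v : V, u ≠ v ∧ G.degree u = β ∧ G.degree v = β) →
      (∀ m : ℕ, (∃ u v : V, u ≠ v ∧ G.degree u = m ∧ G.degree v = m) → m ≤ β) →
      β ≤ n →
      (n : ℝ) + Real.sqrt n ≤ (Δ : ℝ) := by
  refine ⟨1, fun n hn V _ _ G _ Δ β hcard hE hΔ _ ⟨u, _, _, hu, _⟩ hmax hβn => ?_⟩
  have hβΔ : β ≤ Δ := hu ▸ hΔ u
  have hedges := G.four_mul_card_edgeFinset_le hΔ fun u v huv h => hmax _ ⟨u, v, huv, rfl, h.symm⟩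
  rw [hcard] at hedges
  have hsum : 4 * (n ^ 2 + n) ≤ 2 * (2 * n + 1) * β + (Δ - β + 1) * (Δ - β) := by nlinarith
  have := add_sqrt_le_of_four_mul_le n β (Δ - β : ℕ) (mod_cast hn) (by positivity)
    (mod_cast hβn) (by positivity) (mod_cast hsum)
  rwa [Nat.cast_sub hβΔ, add_sub_cancel] at this
end
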